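/- Let z ∈ ℂ with Im z > 0 and define U(z) := ∫_{−√2}^{√2} (1/π)·√(2 − x²)/(x − z) dx. Then U(z)² + 2z·U(z) + 2 = 0 and Im U(z) > 0; in other words, U(z) = −z + w where w is the unique square root of z² − 2 with Im(−z + w) > 0. -/

import Mathlib

/-!
For `r > 0` and `Im z > 0` let `v` be the square root of `z² - r²` in the upper half-plane. Then
`F(x) = √(r² - x²) - z arcsin (x / r) + i v log P(x)`, with
`P(x) = (v √(r² - x²) + i (r² - z x)) / (z - x)`, is a primitive of `√(r² - x²) / (x - z)` on
`(-r, r)`. The map `P` sends `(-r, r)` into the right half-plane and `±r` to `∓ i r`,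
so the principal logarithm keeps `F` continuous on `[-r, r]`, and the fundamental theorem of
calculus gives `∫_{-r}^{r} √(r² - x²) / (x - z) dx = π (v - z)`.

With `r = √2` this says `U = v - z` where `v² = z² - 2`, which is the quadratic relation.
`Im U > 0` is the inequality `Im v > Im z`, and the other square root `-v` gives `Im (-z - v) < 0`.
-/

open Complex
open scoped Real

lemma exists_sq_eq_im_pos {c : ℂ} (hc : ∀ t : ℝ, (t : ℂ) ^ 2 ≠ c) :
    ∃ v : ℂ, v ^ 2 = c ∧ 0 < v.im := by
  obtain ⟨v, hv⟩ := IsAlgClosed.exists_pow_nat_eq c two_pos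
  rcases lt_trichotomy v.im 0 with h | h | h
  · exact ⟨-v, by rw [neg_sq, hv], by simpa using h⟩
  · exact absurd (by rw [← hv, ← re_add_im v, h]; simp) (hc v.re)
  · exact ⟨v, hv, h⟩

lemma ofReal_sq_ne_sq_sub_sq {z : ℂ} (hz : 0 < z.im) (r t : ℝ) :
    (t : ℂ) ^ 2 ≠ z ^ 2 - (r : ℂ) ^ 2 := by
  intro h
  have hre := congrArg re h
  have him := congrArg im h
  simp only [sq, mul_re, mul_im, sub_re, sub_im, ofReal_re, ofReal_im] at hre him
  have hzre : z.re = 0 := by nlinarith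
  nlinarith

lemma im_lt_im_of_sq_eq_sq_sub_sq {z v : ℂ} {r : ℝ} (hr : r ≠ 0)
    (hv : v ^ 2 = z ^ 2 - (r : ℂ) ^ 2) (hv0 : 0 < v.im) : z.im < v.im := by
  have hre := congrArg re hv
  have him := congrArg im hv
  simp only [sq, mul_re, mul_im, sub_re, sub_im, ofReal_re, ofReal_im] at hre him
  by_contra! hle
  have hprod : (v.re * v.im) ^ 2 = (z.re * z.im) ^ 2 := by congr 1; linarith
  have : z.re ^ 2 * v.im ^ 2 ≤ v.re ^ 2 * v.im ^ 2 := by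
    nlinarith [mul_le_mul_of_nonneg_left (pow_le_pow_left₀ hv0.le hle 2) (sq_nonneg z.re)]
  have : z.re ^ 2 ≤ v.re ^ 2 := le_of_mul_le_mul_right this (by positivity)
  nlinarith [sq_pos_of_ne_zero hr]

lemma ofReal_ne_of_im_ne_zero {z : ℂ} (hz : z.im ≠ 0) (x : ℝ) : (x : ℂ) ≠ z :=
  fun h => hz (by simp [← h])

lemma Real.hasDerivAt_sqrt_sq_sub_sq {r x : ℝ} (hx : x ^ 2 < r ^ 2) :
    HasDerivAt (fun y => √(r ^ 2 - y ^ 2)) (-x / √(r ^ 2 - x ^ 2)) x := by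
  have hs : 0 < √(r ^ 2 - x ^ 2) := Real.sqrt_pos.2 (by linarith)
  refine (((hasDerivAt_pow 2 x).const_sub (r ^ 2)).sqrt (by linarith)).congr_deriv ?_
  field_simp
  ring

lemma Real.hasDerivAt_arcsin_div {r x : ℝ} (hr : 0 < r) (hx : x ^ 2 < r ^ 2) :
    HasDerivAt (fun y => Real.arcsin (y / r)) (1 / √(r ^ 2 - x ^ 2)) x := by
  have hxr : (x / r) ^ 2 < 1 := by rwa [div_pow, div_lt_one (by positivity)]
  have hsqrt : √(1 - (x / r) ^ 2) = √(r ^ 2 - x ^ 2) / r := by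
    rw [show 1 - (x / r) ^ 2 = (r ^ 2 - x ^ 2) / r ^ 2 by field_simp,
      Real.sqrt_div' _ (sq_nonneg r), Real.sqrt_sq hr.le]
  have hs : 0 < √(r ^ 2 - x ^ 2) := Real.sqrt_pos.2 (by linarith)
  refine ((Real.hasDerivAt_arcsin (x := x / r) (by nlinarith) (by nlinarith)).comp x
    ((hasDerivAt_id x).div_const r)).congr_deriv ?_
  rw [hsqrt]
  field_simp

noncomputable def semicircleLogArg (r : ℝ) (z v : ℂ) (x : ℝ) : ℂ :=
  (v * √(r ^ 2 - x ^ 2) + I * (r ^ 2 - z * x)) / (z - x)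

noncomputable def semicirclePrimitive (r : ℝ) (z v : ℂ) (x : ℝ) : ℂ :=
  √(r ^ 2 - x ^ 2) - z * Real.arcsin (x / r) + I * v * log (semicircleLogArg r z v x)

section SemicirclePrimitive

variable {r : ℝ} {z v : ℂ}

lemma semicircleLogArg_re_pos (hz : 0 < z.im) (hv : v ^ 2 = z ^ 2 - (r : ℂ) ^ 2)
    (hv0 : 0 < v.im) {x : ℝ} (hx : x ^ 2 < r ^ 2) : 0 < (semicircleLogArg r z v x).re := by
  have hre := congrArg re hv
  have him := congrArg im hv
  simp only [sq, mul_re, mul_im, sub_re, sub_im, ofReal_re, ofReal_im] at hre him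
  set s := √(r ^ 2 - x ^ 2)
  have hs : 0 < s := Real.sqrt_pos.2 (by linarith)
  have hs2 : s ^ 2 = r ^ 2 - x ^ 2 := Real.sq_sqrt (by linarith)
  have hnumer : (v * s + I * (r ^ 2 - z * x)).re * (z - x).re
      + (v * s + I * (r ^ 2 - z * x)).im * (z - x).im
      = s * (v.re * (z.re - x) + z.im * s + z.im * v.im) := by
    simp [sq]
    linear_combination -z.im * hs2
  have hsos : v.im * (v.re * (z.re - x) + z.im * s + z.im * v.im)
      = z.im / 2 * ((z.re - x) ^ 2 + (v.im + s) ^ 2 + v.re ^ 2 + z.im ^ 2) := by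
    linear_combination (z.re - x) * him / 2 - z.im / 2 * hre - z.im / 2 * hs2
  have hfactor : 0 < v.re * (z.re - x) + z.im * s + z.im * v.im :=
    pos_of_mul_pos_right (by rw [hsos]; positivity) hv0.le
  rw [semicircleLogArg, div_re, ← add_div, hnumer]
  exact div_pos (mul_pos hs hfactor)
    (normSq_pos.2 (sub_ne_zero.2 (ofReal_ne_of_im_ne_zero hz.ne' x).symm))

lemma semicircleLogArg_right (hz : 0 < z.im) : semicircleLogArg r z v r = r * -I := by
  rw [semicircleLogArg, div_eq_iff (sub_ne_zero.2 (ofReal_ne_of_im_ne_zero hz.ne' r).symm)]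
  simp
  ring

lemma semicircleLogArg_left (hz : 0 < z.im) : semicircleLogArg r z v (-r) = r * I := by
  rw [semicircleLogArg, div_eq_iff (sub_ne_zero.2 (ofReal_ne_of_im_ne_zero hz.ne' _).symm)]
  simp
  ring

lemma semicircleLogArg_mem_slitPlane (hr : 0 < r) (hz : 0 < z.im)
    (hv : v ^ 2 = z ^ 2 - (r : ℂ) ^ 2) (hv0 : 0 < v.im) {x : ℝ} (hx : x ∈ Set.Icc (-r) r) :
    semicircleLogArg r z v x ∈ slitPlane := by
  rcases hx.1.eq_or_lt with rfl | hlt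
  · simp [semicircleLogArg_left hz, mem_slitPlane_iff, hr.ne']
  rcases hx.2.eq_or_lt with rfl | hgt
  · simp [semicircleLogArg_right hz, mem_slitPlane_iff, hr.ne']
  exact mem_slitPlane_iff.2 (Or.inl (semicircleLogArg_re_pos hz hv hv0 (sq_lt_sq' hlt hgt)))

lemma hasDerivAt_log_semicircleLogArg (hz : 0 < z.im) (hv : v ^ 2 = z ^ 2 - (r : ℂ) ^ 2)
    (hv0 : 0 < v.im) {x : ℝ} (hx : x ^ 2 < r ^ 2) :
    HasDerivAt (fun y => log (semicircleLogArg r z v y))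
      (-I * v / (√(r ^ 2 - x ^ 2) * (z - x))) x := by
  have hpos := semicircleLogArg_re_pos hz hv hv0 hx
  have hB : z - x ≠ 0 := sub_ne_zero.2 (ofReal_ne_of_im_ne_zero hz.ne' x).symm
  have hA : v * √(r ^ 2 - x ^ 2) + I * (r ^ 2 - z * x) ≠ 0 := by
    intro h
    simp [semicircleLogArg, h] at hpos
  have hs : (√(r ^ 2 - x ^ 2) : ℂ) ≠ 0 := ofReal_ne_zero.2 (Real.sqrt_pos.2 (by linarith)).ne'
  have hs2 : (√(r ^ 2 - x ^ 2) : ℂ) ^ 2 = r ^ 2 - x ^ 2 := by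
    rw [← ofReal_pow, Real.sq_sqrt (by linarith)]; push_cast; ring
  have hnum : HasDerivAt (fun y : ℝ => v * √(r ^ 2 - y ^ 2) + I * (r ^ 2 - z * y))
      (v * ((-x / √(r ^ 2 - x ^ 2) : ℝ) : ℂ) + I * (-z)) x := by
    refine ((Real.hasDerivAt_sqrt_sq_sub_sq hx).ofReal_comp.const_mul v).add
      ((((hasDerivAt_id x).ofReal_comp.const_mul z).const_sub _).const_mul I) |>.congr_deriv ?_
    push_cast; ring
  refine ((hnum.div ((hasDerivAt_id x).ofReal_comp.const_sub z) hB).clog_real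
    (mem_slitPlane_iff.2 (Or.inl hpos))).congr_deriv ?_
  simp only [Pi.div_apply, id, ofReal_one, ofReal_div, ofReal_neg]
  set s : ℂ := ((√(r ^ 2 - x ^ 2) : ℝ) : ℂ)
  field_simp
  rw [div_eq_iff (by convert hA using 2; ring)]
  linear_combination v * hs2 + s * I * hv + v * (r ^ 2 - x * z) * I_sq

lemma hasDerivAt_semicirclePrimitive (hr : 0 < r) (hz : 0 < z.im)
    (hv : v ^ 2 = z ^ 2 - (r : ℂ) ^ 2) (hv0 : 0 < v.im) {x : ℝ} (hx : x ^ 2 < r ^ 2) :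
    HasDerivAt (semicirclePrimitive r z v) (√(r ^ 2 - x ^ 2) / (x - z)) x := by
  refine (((Real.hasDerivAt_sqrt_sq_sub_sq hx).ofReal_comp.sub
    ((Real.hasDerivAt_arcsin_div hr hx).ofReal_comp.const_mul z)).add
    ((hasDerivAt_log_semicircleLogArg hz hv hv0 hx).const_mul (I * v))).congr_deriv ?_
  have hB : z - x ≠ 0 := sub_ne_zero.2 (ofReal_ne_of_im_ne_zero hz.ne' x).symm
  have hB' : (x : ℂ) - z ≠ 0 := sub_ne_zero.2 (ofReal_ne_of_im_ne_zero hz.ne' x)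
  have hs : (√(r ^ 2 - x ^ 2) : ℂ) ≠ 0 := ofReal_ne_zero.2 (Real.sqrt_pos.2 (by linarith)).ne'
  have hs2 : (√(r ^ 2 - x ^ 2) : ℂ) ^ 2 = r ^ 2 - x ^ 2 := by
    rw [← ofReal_pow, Real.sq_sqrt (by linarith)]; push_cast; ring
  push_cast
  set s : ℂ := ((√(r ^ 2 - x ^ 2) : ℝ) : ℂ)
  field_simp
  linear_combination (x - z) * hs2 + (x - z) * hv - (x - z) * v ^ 2 * I_sq

lemma continuousOn_semicirclePrimitive (hr : 0 < r) (hz : 0 < z.im)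
    (hv : v ^ 2 = z ^ 2 - (r : ℂ) ^ 2) (hv0 : 0 < v.im) :
    ContinuousOn (semicirclePrimitive r z v) (Set.Icc (-r) r) := by
  intro x hx
  have hP : Continuous (semicircleLogArg r z v) := by
    unfold semicircleLogArg
    fun_prop (disch := exact fun y => sub_ne_zero.2 (ofReal_ne_of_im_ne_zero hz.ne' y).symm)
  have hF : Continuous fun y : ℝ => (√(r ^ 2 - y ^ 2) : ℂ) - z * Real.arcsin (y / r) := by
    have := Real.continuous_arcsin
    fun_prop
  exact (hF.continuousAt.add (continuousAt_const.mul
    (hP.continuousAt.clog (semicircleLogArg_mem_slitPlane hr hz hv hv0 hx)))).continuousWithinAt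

lemma semicirclePrimitive_sub (hr : 0 < r) (hz : 0 < z.im) :
    semicirclePrimitive r z v r - semicirclePrimitive r z v (-r) = π * (-z + v) := by
  simp only [semicirclePrimitive, semicircleLogArg_right hz, semicircleLogArg_left hz,
    log_ofReal_mul hr I_ne_zero, log_ofReal_mul hr (neg_ne_zero.2 I_ne_zero), log_I, log_neg_I]
  simp [div_self hr.ne', neg_div]
  linear_combination -(v * π) * I_sq

theorem integral_sqrt_sq_sub_sq_div_sub (hr : 0 < r) (hz : 0 < z.im)
    (hv : v ^ 2 = z ^ 2 - (r : ℂ) ^ 2) (hv0 : 0 < v.im) :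
    ∫ x in -r..r, (√(r ^ 2 - x ^ 2) : ℂ) / (x - z) = π * (-z + v) := by
  have hcont : Continuous fun x : ℝ => (√(r ^ 2 - x ^ 2) : ℂ) / (x - z) := by
    fun_prop (disch := exact fun x => sub_ne_zero.2 (ofReal_ne_of_im_ne_zero hz.ne' x))
  rw [intervalIntegral.integral_eq_sub_of_hasDerivAt_of_le (by linarith)
    (continuousOn_semicirclePrimitive hr hz hv hv0)
    (fun x hx => hasDerivAt_semicirclePrimitive hr hz hv hv0 (sq_lt_sq' hx.1 hx.2))
    (hcont.intervalIntegrable _ _), semicirclePrimitive_sub hr hz]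

end SemicirclePrimitive

/-- the Stieltjes transform of the semicircle law,
`U = ∫_{-√2}^{√2} (1/π)√(2-x²)/(x - z) dx` for `Im z > 0`, satisfies
`U² + 2zU + 2 = 0` and `Im U > 0`; in other words, `U = -z + w` where `w` is the unique
square root of `z² - 2` with `Im(-z + w) > 0`. -/
theorem stmt_17 (z : ℂ) (hz : 0 < z.im)
    (U : ℂ)
    (hU : U = ∫ x in (-Real.sqrt 2)..Real.sqrt 2,
      (((1 / Real.pi) * Real.sqrt (2 - x ^ 2) : ℝ) : ℂ) / ((x : ℂ) - z)) :
    U ^ 2 + 2 * z * U + 2 = 0 ∧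
    0 < U.im ∧
    ∀ w : ℂ, w ^ 2 = z ^ 2 - 2 → 0 < (-z + w).im → U = -z + w := by
  have hr : 0 < √2 := Real.sqrt_pos.2 two_pos
  obtain ⟨v, hv, hv0⟩ := exists_sq_eq_im_pos (ofReal_sq_ne_sq_sub_sq hz √2)
  have hv2 : v ^ 2 = z ^ 2 - 2 := by
    rw [hv, ← ofReal_pow, Real.sq_sqrt zero_le_two, ofReal_ofNat]
  have hUv : U = -z + v := by
    have h := integral_sqrt_sq_sub_sq_div_sub hr hz hv hv0
    rw [Real.sq_sqrt zero_le_two] at h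
    simp only [hU, ofReal_mul, ofReal_div, ofReal_one, mul_div_assoc,
      intervalIntegral.integral_const_mul, h]
    field_simp
  have hUim : 0 < U.im := by
    have := im_lt_im_of_sq_eq_sq_sub_sq hr.ne' hv hv0
    simp only [hUv, add_im, neg_im]
    linarith
  refine ⟨by rw [hUv]; linear_combination hv2, hUim, fun w hw hwim => ?_⟩
  rcases sq_eq_sq_iff_eq_or_eq_neg.1 (hw.trans hv2.symm) with rfl | rfl
  · exact hUv
  · simp only [add_im, neg_im] at hwim
    linarith
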